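/- Let B_n and F_n be n×n real matrices and B_T and F_T be T×T real matrices. Assume that I_n − B_n, I_T − B_T, F_n, and F_T are all invertible. Then [(I_n − B_n)ᵀ F_n (I_n − B_n)]^{-1} ⊗ [(I_T − B_T)ᵀ F_T (I_T − B_T)]^{-1} = [(I_{nT} − B_{nT})ᵀ (F_n ⊗ F_T) (I_{nT} − B_{nT})]^{-1}, where B_{nT} = I_n ⊗ B_T + B_n ⊗ I_T − B_n ⊗ B_T and ⊗ denotes the Kronecker product. -/

import Mathlib

open Matrix Kronecker

/-! `B_{nT}` is chosen so that `I − B_{nT} = (I − B_n) ⊗ (I − B_T)`; the mixed-product rule then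
turns the Kronecker product of the two precision matrices into the precision matrix of the product,
and the Kronecker product commutes with inversion. -/

namespace Matrix

variable {m n α : Type*}

theorem one_sub_kronecker_one_sub [Ring α] [DecidableEq m] [DecidableEq n]
    (A : Matrix m m α) (B : Matrix n n α) :
    (1 - A) ⊗ₖ (1 - B) = 1 - (1 ⊗ₖ B + A ⊗ₖ 1 - A ⊗ₖ B) := by
  rw [← one_kronecker_one]
  ext ⟨i, j⟩ ⟨k, l⟩
  simp only [kronecker_apply, sub_apply, add_apply, sub_mul, mul_sub]
  abel

theorem kronecker_transpose_mul_mul [CommSemiring α] [Fintype m] [Fintype n]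
    (A F : Matrix m m α) (B G : Matrix n n α) :
    (Aᵀ * F * A) ⊗ₖ (Bᵀ * G * B) = (A ⊗ₖ B)ᵀ * (F ⊗ₖ G) * (A ⊗ₖ B) := by
  rw [mul_kronecker_mul, mul_kronecker_mul, kroneckerMap_transpose]

end Matrix

theorem stmt3_general (n T : ℕ)
    (Bn Fn : Matrix (Fin n) (Fin n) ℝ) (BT FT : Matrix (Fin T) (Fin T) ℝ)
    (BnT : Matrix (Fin n × Fin T) (Fin n × Fin T) ℝ)
    (hBnT : BnT = (1 : Matrix (Fin n) (Fin n) ℝ) ⊗ₖ BT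
        + Bn ⊗ₖ (1 : Matrix (Fin T) (Fin T) ℝ) - Bn ⊗ₖ BT) :
    (((1 : Matrix (Fin n) (Fin n) ℝ) - Bn)ᵀ * Fn * ((1 : Matrix (Fin n) (Fin n) ℝ) - Bn))⁻¹
        ⊗ₖ (((1 : Matrix (Fin T) (Fin T) ℝ) - BT)ᵀ * FT
            * ((1 : Matrix (Fin T) (Fin T) ℝ) - BT))⁻¹ =
      ((1 - BnT)ᵀ * (Fn ⊗ₖ FT) * (1 - BnT))⁻¹ := by
  rw [hBnT, ← one_sub_kronecker_one_sub, ← kronecker_transpose_mul_mul, inv_kronecker]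

/-- Theorem 3.1 (core identity): if `I_n − B_n`, `I_T − B_T`, `F_n`, `F_T` are invertible, then
`[(I_n − B_n)ᵀ F_n (I_n − B_n)]⁻¹ ⊗ [(I_T − B_T)ᵀ F_T (I_T − B_T)]⁻¹
  = [(I_{nT} − B_{nT})ᵀ (F_n ⊗ F_T) (I_{nT} − B_{nT})]⁻¹`,
where `B_{nT} = I_n ⊗ B_T + B_n ⊗ I_T − B_n ⊗ B_T`. -/
theorem stmt3 (n T : ℕ)
    (Bn Fn : Matrix (Fin n) (Fin n) ℝ) (BT FT : Matrix (Fin T) (Fin T) ℝ)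
    (hBn : IsUnit ((1 : Matrix (Fin n) (Fin n) ℝ) - Bn))
    (hBT : IsUnit ((1 : Matrix (Fin T) (Fin T) ℝ) - BT))
    (hFn : IsUnit Fn) (hFT : IsUnit FT)
    (BnT : Matrix (Fin n × Fin T) (Fin n × Fin T) ℝ)
    (hBnT : BnT = (1 : Matrix (Fin n) (Fin n) ℝ) ⊗ₖ BT
        + Bn ⊗ₖ (1 : Matrix (Fin T) (Fin T) ℝ) - Bn ⊗ₖ BT) :
    (((1 : Matrix (Fin n) (Fin n) ℝ) - Bn)ᵀ * Fn * ((1 : Matrix (Fin n) (Fin n) ℝ) - Bn))⁻¹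
        ⊗ₖ (((1 : Matrix (Fin T) (Fin T) ℝ) - BT)ᵀ * FT
            * ((1 : Matrix (Fin T) (Fin T) ℝ) - BT))⁻¹ =
      ((1 - BnT)ᵀ * (Fn ⊗ₖ FT) * (1 - BnT))⁻¹ :=
  stmt3_general n T Bn Fn BT FT BnT hBnT
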